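/- arXiv:2106.07715 — 2 statements merged into one kernel-verified Lean document; each statement's English description precedes it below -/
import Mathlib

section
/- Let ρ ∈ [0,1) and let θ = (1-ρ)/2. For any number of allowed searches covering all sequences with at most k transitions, the MLTS success probability I_{1-θ}(L-1-k, k+1) = ∑_{i=0}^{k} C(L-1,i) θ^i (1-θ)^{L-1-i} is at least the random-guess success probability (∑_{i=0}^{k} 2·C(L-1,i)) / 2^L, with equality when ρ = 0. -/
/-!
The MLTS success probability is the lower tail `∑_{i ≤ k} b_{n,i}(θ)` of the binomial
distribution `Bin(n, θ)`, `n = L - 1`, i.e. a sum of Bernstein polynomials. Its derivative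
telescopes to `-n b_{n-1,k}(θ) ≤ 0`, so it is antitone on `[0, 1]`. Since `θ ≤ 1/2`, it is at
least its value at `θ = 1/2`, which is exactly the random-guess probability `∑_{i ≤ k} C(n,i) / 2^n`.
-/

open Polynomial Finset

theorem derivative_sum_bernsteinPolynomial {R : Type*} [CommRing R] (n k : ℕ) :
    derivative (∑ ν ∈ range (k + 1), bernsteinPolynomial R n ν) =
      -n * bernsteinPolynomial R (n - 1) k := by
  induction k with
  | zero => simp [bernsteinPolynomial.derivative_zero]
  | succ k ih =>
    rw [sum_range_succ, derivative_add, ih, bernsteinPolynomial.derivative_succ]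
    ring

theorem bernsteinPolynomial_eval_nonneg {R : Type*} [CommRing R] [LinearOrder R]
    [IsStrictOrderedRing R] (n ν : ℕ) {x : R} (hx : x ∈ Set.Icc 0 1) :
    0 ≤ (bernsteinPolynomial R n ν).eval x := by
  have hx₀ : 0 ≤ x := hx.1
  have hx₁ : 0 ≤ 1 - x := sub_nonneg.2 hx.2
  simp only [bernsteinPolynomial, eval_mul, eval_pow, eval_sub, eval_one, eval_X, eval_natCast]
  positivity

theorem antitoneOn_eval_sum_bernsteinPolynomial (n k : ℕ) :
    AntitoneOn (fun x ↦ (∑ ν ∈ range (k + 1), bernsteinPolynomial ℝ n ν).eval x)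
      (Set.Icc 0 1) := by
  refine antitoneOn_of_deriv_nonpos (convex_Icc 0 1) (Polynomial.continuousOn _)
    (Polynomial.differentiableOn _) fun x hx ↦ ?_
  rw [Polynomial.deriv, derivative_sum_bernsteinPolynomial, eval_mul, eval_neg, eval_natCast,
    neg_mul, neg_nonpos]
  exact mul_nonneg n.cast_nonneg (bernsteinPolynomial_eval_nonneg _ _ (interior_subset hx))

theorem bernsteinPolynomial_eval_half (n ν : ℕ) :
    (bernsteinPolynomial ℝ n ν).eval (1 / 2) = 2 * n.choose ν / 2 ^ (n + 1) := by
  rcases le_or_gt ν n with hν | hν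
  · simp only [bernsteinPolynomial, eval_mul, eval_pow, eval_sub, eval_one, eval_X, eval_natCast]
    rw [show (1 : ℝ) - 1 / 2 = 1 / 2 by norm_num, mul_assoc, ← pow_add, Nat.add_sub_cancel' hν,
      one_div_pow, pow_succ]
    field_simp
  · simp [bernsteinPolynomial.eq_zero_of_lt _ hν, Nat.choose_eq_zero_of_lt hν]

theorem sum_bernsteinPolynomial_eval_half (n k : ℕ) :
    (∑ ν ∈ range (k + 1), bernsteinPolynomial ℝ n ν).eval (1 / 2) =
      (∑ i ∈ range (k + 1), 2 * (n.choose i : ℝ)) / 2 ^ (n + 1) := by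
  simp only [eval_finsetSum, bernsteinPolynomial_eval_half, sum_div]

theorem sum_bernsteinPolynomial_eval (n k : ℕ) (x : ℝ) :
    (∑ ν ∈ range (k + 1), bernsteinPolynomial ℝ n ν).eval x =
      ∑ i ∈ range (k + 1), (n.choose i : ℝ) * x ^ i * (1 - x) ^ (n - i) := by
  simp [eval_finsetSum, bernsteinPolynomial]

theorem mlts_ge_random_guess_general (ρ : ℝ) (hρ : ρ ∈ Set.Ico (0:ℝ) 1)
    (θ : ℝ) (hθ : θ = (1 - ρ)/2) (L k : ℕ) (hL : 1 ≤ L) :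
    (∑ i ∈ Finset.range (k+1),
        (Nat.choose (L-1) i : ℝ) * θ ^ i * (1-θ) ^ (L-1-i))
      ≥ (∑ i ∈ Finset.range (k+1), 2 * (Nat.choose (L-1) i : ℝ)) / 2 ^ L
    ∧ (ρ = 0 →
      (∑ i ∈ Finset.range (k+1),
          (Nat.choose (L-1) i : ℝ) * θ ^ i * (1-θ) ^ (L-1-i))
        = (∑ i ∈ Finset.range (k+1), 2 * (Nat.choose (L-1) i : ℝ)) / 2 ^ L) := by
  obtain ⟨n, rfl⟩ : ∃ n, L = n + 1 := ⟨L - 1, by omega⟩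
  obtain ⟨hρ₀, hρ₁⟩ := hρ
  simp only [Nat.add_sub_cancel, ← sum_bernsteinPolynomial_eval,
    ← sum_bernsteinPolynomial_eval_half]
  refine ⟨antitoneOn_eval_sum_bernsteinPolynomial n k ?_ (by norm_num) ?_, ?_⟩
  · constructor <;> linarith
  · linarith
  · rintro rfl
    norm_num [hθ]

/-- MLTS success probability dominates the random-guess success probability,
with equality at `ρ = 0`. -/
theorem mlts_ge_random_guess (ρ : ℝ) (hρ : ρ ∈ Set.Ico (0:ℝ) 1)
    (θ : ℝ) (hθ : θ = (1 - ρ)/2) (L k : ℕ) (hL : 1 ≤ L) (hk : k ≤ L - 1) :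
    (∑ i ∈ Finset.range (k+1),
        (Nat.choose (L-1) i : ℝ) * θ ^ i * (1-θ) ^ (L-1-i))
      ≥ (∑ i ∈ Finset.range (k+1), 2 * (Nat.choose (L-1) i : ℝ)) / 2 ^ L
    ∧ (ρ = 0 →
      (∑ i ∈ Finset.range (k+1),
          (Nat.choose (L-1) i : ℝ) * θ ^ i * (1-θ) ^ (L-1-i))
        = (∑ i ∈ Finset.range (k+1), 2 * (Nat.choose (L-1) i : ℝ)) / 2 ^ L) :=
  mlts_ge_random_guess_general ρ hρ θ hθ L k hL
end

section
/- For α ∈ (0,1) and ρ ∈ (0,1), h_freq(ρ, α) < 1 - α; i.e., a positively correlated bit sequence passes the frequency test with strictly smaller probability than an independent sequence at the same threshold. -/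
noncomputable def erf (x : ℝ) : ℝ :=
  (2 / Real.sqrt Real.pi) * ∫ t in (0:ℝ)..x, Real.exp (-t^2)

noncomputable def erfc (x : ℝ) : ℝ := 1 - erf x

noncomputable def erfcInv : ℝ → ℝ := Function.invFun erfc

noncomputable def hfreq (ρ α : ℝ) : ℝ :=
  erf (erfcInv α * Real.sqrt ((1 - ρ) / (1 + ρ)))

open MeasureTheory intervalIntegral Real

lemma gauss_cont : Continuous fun t : ℝ => Real.exp (-t^2) := by continuity

lemma erf_strictMono : StrictMono erf := by
  intro a b hab
  unfold erf
  have hpi : 0 < Real.sqrt Real.pi := Real.sqrt_pos.mpr Real.pi_pos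
  apply mul_lt_mul_of_pos_left _ (by positivity)
  have key : 0 < ∫ t in a..b, Real.exp (-t^2) := by
    apply intervalIntegral.integral_pos hab (gauss_cont.continuousOn)
    · intro x _; positivity
    · exact ⟨a, ⟨le_refl _, hab.le⟩, by positivity⟩
  have := intervalIntegral.integral_add_adjacent_intervals
    (μ := volume) (a := (0:ℝ)) (b := a) (c := b)
    (gauss_cont.intervalIntegrable 0 a) (gauss_cont.intervalIntegrable a b)
  linarith [this]

lemma erf_tendsto : Filter.Tendsto erf Filter.atTop (nhds 1) := by
  have hint : IntegrableOn (fun t : ℝ => Real.exp (-t^2)) (Set.Ioi 0) := by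
    have : IntegrableOn (fun t : ℝ => Real.exp (-(1:ℝ) * t^2)) (Set.Ioi 0) :=
      (integrableOn_Ioi_exp_neg_mul_sq_iff.mpr one_pos)
    simpa using this
  have h := intervalIntegral_tendsto_integral_Ioi (μ := volume) 0 hint Filter.tendsto_id
  have hval : ∫ t in Set.Ioi (0:ℝ), Real.exp (-t^2) = Real.sqrt Real.pi / 2 := by
    have := integral_gaussian_Ioi 1
    simpa using this
  rw [hval] at h
  have h2 := h.const_mul (2 / Real.sqrt Real.pi)
  have hpi : Real.sqrt Real.pi ≠ 0 := ne_of_gt (Real.sqrt_pos.mpr Real.pi_pos)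
  have heq : (2 / Real.sqrt Real.pi) * (Real.sqrt Real.pi / 2) = 1 := by field_simp
  rw [heq] at h2
  unfold erf
  simpa [mul_comm] using h2

lemma erf_continuous : Continuous erf := by
  unfold erf
  exact continuous_const.mul (intervalIntegral.continuous_primitive
    (fun a b => gauss_cont.intervalIntegrable a b) 0)

lemma erf_zero : erf 0 = 0 := by simp [erf]

lemma erf_surj_Ioo {y : ℝ} (hy0 : 0 < y) (hy1 : y < 1) : ∃ x, erf x = y := by
  obtain ⟨X, hX⟩ := (erf_tendsto.eventually (eventually_gt_nhds hy1)).exists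
  have hiv := intermediate_value_univ (f := erf) 0 X erf_continuous
  have : y ∈ Set.Icc (erf 0) (erf X) := by
    rw [erf_zero]; exact ⟨hy0.le, hX.le⟩
  exact hiv this

/-- A positively correlated sequence passes the frequency test with strictly
smaller probability than an independent one: `h_freq(ρ, α) < 1 - α`. -/
theorem hfreq_lt_of_pos_corr (ρ α : ℝ) (hρ : ρ ∈ Set.Ioo (0:ℝ) 1)
    (hα : α ∈ Set.Ioo (0:ℝ) 1) :
    hfreq ρ α < 1 - α := by
  obtain ⟨hρ0, hρ1⟩ := hρ
  obtain ⟨hα0, hα1⟩ := hα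
  -- α is in the range of erfc
  obtain ⟨x₀, hx₀⟩ := erf_surj_Ioo (y := 1 - α) (by linarith) (by linarith)
  have hrange : ∃ x, erfc x = α := ⟨x₀, by simp [erfc, hx₀]⟩
  have herfc : erfc (erfcInv α) = α := Function.invFun_eq hrange
  have herf : erf (erfcInv α) = 1 - α := by
    have : 1 - erf (erfcInv α) = α := herfc
    linarith
  have hxpos : 0 < erfcInv α := by
    by_contra h
    push_neg at h
    have := erf_strictMono.monotone h
    rw [herf, erf_zero] at this
    linarith
  set s := Real.sqrt ((1 - ρ) / (1 + ρ)) with hs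
  have hs1 : s < 1 := by
    rw [hs]
    have h1 : (1 - ρ) / (1 + ρ) < 1 := by
      rw [div_lt_one (by linarith)]; linarith
    calc Real.sqrt ((1 - ρ) / (1 + ρ)) < Real.sqrt 1 :=
          Real.sqrt_lt_sqrt (div_nonneg (by linarith) (by linarith)) h1
      _ = 1 := Real.sqrt_one
  have hlt : erfcInv α * s < erfcInv α := by
    nlinarith [Real.sqrt_nonneg ((1 - ρ) / (1 + ρ))]
  calc hfreq ρ α = erf (erfcInv α * s) := rfl
    _ < erf (erfcInv α) := erf_strictMono hlt
    _ = 1 - α := herf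
end
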